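/- arXiv:1904.03978 — 2 statements merged into one kernel-verified Lean document; each statement's English description precedes it below -/
import Mathlib

section
/- Let F be a field and f ∈ F[x] irreducible. Let h₁, h₂ ∈ F[x] satisfy IsCoprime f (x − h₁²) and IsCoprime f (x − h₂²), and suppose f does not divide h₁ + h₂. Let g₁, g₂ ∈ F[x] satisfy g₁·f + g₂·(h₁ + h₂) = 1, and let h₃ be the remainder of g₂·(h₁·h₂ + x) upon division by f. Then IsCoprime f (x − h₃²). -/
open Polynomial

/-!
Write `s = h₁ + h₂` and `p = h₁ h₂ + X`. The Bézout relation makes `g₂` an inverse of `s`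
modulo `f`, so `s h₃ ≡ p (mod f)`, and the identity `s² X - p² = -(X - h₁²)(X - h₂²)` gives
`s² (X - h₃²) ≡ -(X - h₁²)(X - h₂²) (mod f)`. The right side is coprime to `f`, hence so is
`X - h₃²`.
-/

theorem IsCoprime.of_dvd_sub {R : Type*} [CommRing R] {f x y : R} (h : IsCoprime f x)
    (hd : f ∣ y - x) : IsCoprime f y := by
  obtain ⟨k, hk⟩ := hd
  rw [sub_eq_iff_eq_add'.mp hk]
  exact h.add_mul_left_right k

theorem IsCoprime.sub_sq_of_dvd_add_mul_sub {R : Type*} [CommRing R] {f a b₁ b₂ b : R}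
    (h₁ : IsCoprime f (a - b₁ ^ 2)) (h₂ : IsCoprime f (a - b₂ ^ 2))
    (hb : f ∣ (b₁ + b₂) * b - (b₁ * b₂ + a)) : IsCoprime f (a - b ^ 2) := by
  have hsq : IsCoprime f ((b₁ + b₂) ^ 2 * (a - b ^ 2)) := by
    refine (h₁.mul_right h₂).neg_right.of_dvd_sub ?_
    have hdiff : (b₁ + b₂) ^ 2 * (a - b ^ 2) - -((a - b₁ ^ 2) * (a - b₂ ^ 2))
        = -(((b₁ + b₂) * b - (b₁ * b₂ + a)) * ((b₁ + b₂) * b + (b₁ * b₂ + a))) := by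
      ring
    rw [hdiff]
    exact (hb.mul_right _).neg_right
  exact hsq.of_mul_right_right

theorem dvd_mul_mul_mod_sub {R : Type*} [EuclideanDomain R] {f s g₁ g₂ : R}
    (hbez : g₁ * f + g₂ * s = 1) (p : R) : f ∣ s * (g₂ * p % f) - p := by
  rw [EuclideanDomain.mod_eq_sub_mul_div]
  exact ⟨-(g₁ * p) - s * (g₂ * p / f), by linear_combination p * hbez⟩

theorem nodal_sum_representable_general {F : Type*} [Field F] (f h₁ h₂ g₁ g₂ : F[X])
    (hc1 : IsCoprime f (X - h₁ ^ 2))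
    (hc2 : IsCoprime f (X - h₂ ^ 2))
    (hbez : g₁ * f + g₂ * (h₁ + h₂) = 1) :
    IsCoprime f (X - ((g₂ * (h₁ * h₂ + X)) % f) ^ 2) :=
  hc1.sub_sq_of_dvd_add_mul_sub hc2 (dvd_mul_mul_mod_sub hbez _)

/-- The addition law preserves representability: if `f` is irreducible,
`IsCoprime f (X - h₁²)`, `IsCoprime f (X - h₂²)`, `f ∤ h₁ + h₂`,
`g₁·f + g₂·(h₁+h₂) = 1`, and `h₃ = (g₂·(h₁·h₂ + X)) % f`, then `IsCoprime f (X - h₃²)`. -/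
theorem nodal_sum_representable {F : Type*} [Field F] (f h₁ h₂ g₁ g₂ : F[X])
    (hf : Irreducible f)
    (hc1 : IsCoprime f (X - h₁ ^ 2))
    (hc2 : IsCoprime f (X - h₂ ^ 2))
    (hnd : ¬ f ∣ (h₁ + h₂))
    (hbez : g₁ * f + g₂ * (h₁ + h₂) = 1) :
    IsCoprime f (X - ((g₂ * (h₁ * h₂ + X)) % f) ^ 2) :=
  nodal_sum_representable_general f h₁ h₂ g₁ g₂ hc1 hc2 hbez
end

section
/- Let K be a field, t ∈ K, and let L = K[y]/(y² − t) with y the image of the adjoined root. For all h₁, h₂ ∈ K with h₁ + h₂ ≠ 0, the identity (h₁ + y)·(h₂ + y) = (h₁ + h₂)·(h₃ + y) holds in L, where h₃ = (h₁·h₂ + t)/(h₁ + h₂). -/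
open Polynomial

theorem AdjoinRoot.root_X_pow_two_sub_C_sq {R : Type*} [CommRing R] (t : R) :
    root (X ^ 2 - C t) ^ 2 = algebraMap R (AdjoinRoot (X ^ 2 - C t)) t := by
  have h := eval₂_root (X ^ 2 - C t)
  simp only [eval₂_sub, eval₂_X_pow, eval₂_C, sub_eq_zero] at h
  rw [h, algebraMap_eq]

theorem add_mul_add_eq_of_sq_eq_algebraMap {K A : Type*} [Field K] [CommRing A] [Algebra K A]
    {t : K} {y : A} (hy : y ^ 2 = algebraMap K A t) {h₁ h₂ : K} (hne : h₁ + h₂ ≠ 0) :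
    (algebraMap K A h₁ + y) * (algebraMap K A h₂ + y)
      = algebraMap K A (h₁ + h₂) * (algebraMap K A ((h₁ * h₂ + t) / (h₁ + h₂)) + y) := by
  have hdiv : (h₁ + h₂) * ((h₁ * h₂ + t) / (h₁ + h₂)) = h₁ * h₂ + t := mul_div_cancel₀ _ hne
  rw [mul_add (algebraMap K A (h₁ + h₂)), ← map_mul, hdiv]
  simp only [map_add, map_mul]
  linear_combination hy

/-- In `L = K[y]/(y² − t)`, for `h₁ + h₂ ≠ 0`,
`(h₁ + y)·(h₂ + y) = (h₁ + h₂)·(h₃ + y)` where `h₃ = (h₁·h₂ + t)/(h₁ + h₂)`. -/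
theorem nodal_law_from_torus {K : Type*} [Field K] (t : K) (h₁ h₂ : K)
    (hne : h₁ + h₂ ≠ 0) :
    (algebraMap K (AdjoinRoot (X ^ 2 - C t)) h₁ + AdjoinRoot.root (X ^ 2 - C t))
        * (algebraMap K (AdjoinRoot (X ^ 2 - C t)) h₂ + AdjoinRoot.root (X ^ 2 - C t))
      = algebraMap K (AdjoinRoot (X ^ 2 - C t)) (h₁ + h₂)
        * (algebraMap K (AdjoinRoot (X ^ 2 - C t)) ((h₁ * h₂ + t) / (h₁ + h₂))
            + AdjoinRoot.root (X ^ 2 - C t)) :=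
  add_mul_add_eq_of_sq_eq_algebraMap (AdjoinRoot.root_X_pow_two_sub_C_sq t) hne
end
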